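/- arXiv:1908.09463 — 2 statements merged into one kernel-verified Lean document; each statement's English description precedes it below -/
import Mathlib

section
/- Let p be an odd prime, let n = p², and let G be the cyclic subgroup of (Z_n)^× generated by the unit e = p − 1. Then for every α ∈ Z_n, the cardinality of the coset αG = {α·g : g ∈ G} equals 1 if α = 0, equals 2 if α ≠ 0 and p divides α, and equals 2p if p does not divide α. -/
/-!
Write `e = p - 1 = -(1 - p)`. In `ZMod (p ^ 2)` the element `1 - p` has order `p` and `-1` has
order `2`, so `e` has order `2p`. A unit `α` is moved freely by `⟨e⟩`, giving `2p` elements.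
If `p ∣ α` then `α * p = 0`, so `e` acts on `α` as `-1` and the orbit is `{α, -α}`, which has
two elements because `p ^ 2` is odd.
-/

/-- The coset (orbit) `xG = {x * g : g ∈ G}` of `x : R` under a subgroup `G` of `Rˣ`. -/
def coset {R : Type*} [Monoid R] (G : Subgroup Rˣ) (x : R) : Set R :=
  {y | ∃ g ∈ G, y = x * (g : R)}

section Coset

variable {R : Type*}

lemma coset_zero [MonoidWithZero R] (G : Subgroup Rˣ) : coset G (0 : R) = {0} := by
  ext y
  simp only [coset, zero_mul, Set.mem_ofPred_eq, Set.mem_singleton_iff]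
  exact ⟨fun ⟨_, _, hy⟩ ↦ hy, fun hy ↦ ⟨1, G.one_mem, hy⟩⟩

lemma ncard_coset_of_isUnit [Monoid R] (G : Subgroup Rˣ) {α : R} (hα : IsUnit α) :
    (coset G α).ncard = Nat.card G := by
  have hcoset : coset G α = (α * ·) '' (Units.val '' (G : Set Rˣ)) := by
    ext y
    simp only [coset, Set.mem_ofPred_eq, Set.image_image, Set.mem_image, SetLike.mem_coe, eq_comm]
  rw [hcoset, Set.ncard_image_of_injective _ (fun _ _ ↦ hα.mul_left_cancel),
    Set.ncard_image_of_injective _ Units.val_injective]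
  exact (Nat.card_coe_set_eq (G : Set Rˣ)).symm

lemma coset_zpowers_eq_pair_of_mul_eq_neg [Ring R] [Finite Rˣ] {α : R} {e : Rˣ}
    (h : α * e = -α) : coset (Subgroup.zpowers e) α = {α, -α} := by
  have hpow : ∀ n : ℕ, α * ((e ^ n : Rˣ) : R) = (-1) ^ n * α := by
    intro n
    induction n with
    | zero => simp
    | succ n ih =>
      rw [pow_succ, Units.val_mul, ← mul_assoc, ih, mul_assoc, h, pow_succ, mul_neg_one, neg_mul,
        mul_neg]
  ext y
  simp only [coset, Set.mem_ofPred_eq, Set.mem_insert_iff, Set.mem_singleton_iff]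
  constructor
  · rintro ⟨g, hg, rfl⟩
    obtain ⟨n, rfl⟩ := mem_powers_iff_mem_zpowers.mpr hg
    rw [hpow]
    rcases neg_one_pow_eq_or R n with h1 | h1 <;> simp [h1]
  · rintro (rfl | rfl)
    · exact ⟨1, Subgroup.one_mem _, (mul_one y).symm⟩
    · exact ⟨e, Subgroup.mem_zpowers e, h.symm⟩

end Coset

namespace ZMod

lemma neg_ne_self_of_odd {n : ℕ} (hn : Odd n) {a : ZMod n} (ha : a ≠ 0) : -a ≠ a := by
  rw [Ne, neg_eq_self_iff]
  obtain ⟨k, rfl⟩ := hn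
  rintro (h | h)
  exacts [ha h, by omega]

lemma isUnit_of_not_natCast_dvd {p d : ℕ} (hp : p.Prime) {α : ZMod (p ^ d)}
    (h : ¬ (p : ZMod (p ^ d)) ∣ α) : IsUnit α := by
  rcases d.eq_zero_or_pos with rfl | hd
  · have : Subsingleton (ZMod (p ^ 0)) := by rw [pow_zero]; infer_instance
    exact isUnit_of_subsingleton α
  have : NeZero (p ^ d) := ⟨pow_ne_zero d hp.ne_zero⟩
  rw [← natCast_zmod_val α, isUnit_natCast_iff_not_dvd_pow hp hd]
  rintro ⟨c, hc⟩
  exact h ⟨c, by rw [← natCast_zmod_val α, hc, Nat.cast_mul]⟩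

lemma mul_natCast_eq_zero_of_natCast_dvd {p : ℕ} {α : ZMod (p ^ 2)} (h : (p : ZMod (p ^ 2)) ∣ α) :
    α * p = 0 := by
  obtain ⟨c, rfl⟩ := h
  have hsq : ((p ^ 2 : ℕ) : ZMod (p ^ 2)) = 0 := natCast_self _
  push_cast at hsq
  linear_combination c * hsq

lemma orderOf_natCast_sub_one {p : ℕ} (hp : p.Prime) (hodd : p ≠ 2) :
    orderOf (p - 1 : ZMod (p ^ 2)) = 2 * p := by
  have hneg_one : orderOf (-1 : ZMod (p ^ 2)) = 2 := by
    have hne : p ^ 2 ≠ 2 := by nlinarith [hp.two_le]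
    have : Fact (1 < p ^ 2) := ⟨by nlinarith [hp.two_le]⟩
    rw [orderOf_neg_one, ringChar_zmod_n, if_neg hne]
  have hone_sub : orderOf (1 + p * ((-1 : ℤ) : ZMod (p ^ 2))) = p := by
    have h := orderOf_one_add_mul_prime hp hodd (-1) (by
      rw [Int.dvd_neg, Int.natCast_dvd_ofNat, Nat.dvd_one]; exact hp.ne_one) 1
    rwa [pow_one] at h
  have hsplit : (p - 1 : ZMod (p ^ 2)) = -1 * (1 + p * ((-1 : ℤ) : ZMod (p ^ 2))) := by
    push_cast; ring
  rw [hsplit, (Commute.all _ _).orderOf_mul_eq_mul_orderOf_of_coprime, hneg_one, hone_sub]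
  · rw [hneg_one, hone_sub, Nat.coprime_two_left]
    exact hp.odd_of_ne_two hodd

end ZMod

theorem stmt_9 (p : ℕ) (hp : p.Prime) (hodd : p ≠ 2) (e : (ZMod (p ^ 2))ˣ)
    (he : (e : ZMod (p ^ 2)) = (p : ZMod (p ^ 2)) - 1) :
    ∀ α : ZMod (p ^ 2),
      (α = 0 → (coset (Subgroup.zpowers e) α).ncard = 1) ∧
      (α ≠ 0 → (p : ZMod (p ^ 2)) ∣ α → (coset (Subgroup.zpowers e) α).ncard = 2) ∧
      (¬ (p : ZMod (p ^ 2)) ∣ α → (coset (Subgroup.zpowers e) α).ncard = 2 * p) := by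
  intro α
  refine ⟨fun h0 ↦ ?_, fun hα0 hdvd ↦ ?_, fun hndvd ↦ ?_⟩
  · rw [h0, coset_zero, Set.ncard_singleton]
  · have hαe : α * e = -α := by
      rw [he]
      linear_combination ZMod.mul_natCast_eq_zero_of_natCast_dvd hdvd
    have hodd_sq : Odd (p ^ 2) := (hp.odd_of_ne_two hodd).pow
    rw [coset_zpowers_eq_pair_of_mul_eq_neg hαe,
      Set.ncard_pair (ZMod.neg_ne_self_of_odd hodd_sq hα0).symm]
  · rw [ncard_coset_of_isUnit _ (ZMod.isUnit_of_not_natCast_dvd hp hndvd), Nat.card_zpowers,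
      ← orderOf_units, he, ZMod.orderOf_natCast_sub_one hp hodd]
end

section
/- Let p be an odd prime and k > 2 an integer, let n = p^k, and let G be the cyclic subgroup of (Z_n)^× generated by the unit e = p^{k−1} − 1. For x ∈ Z_n let xG = {x·g : g ∈ G}. Then (i) the number of distinct cosets {xG : x ∈ Z_n} equals (2p^{k−1} − p^{k−2} + 1)/2, and (ii) for every nonzero α ∈ Z_n, the cardinality of {x ∈ Z_n : (x+α)G = xG} equals p^k − p^{k−1} + 1 if p^{k−1} divides α, equals p if p does not divide α, and equals 1 if p divides α but p^{k−1} does not divide α; in particular the coset index function is a (p^k, (2p^{k−1}−p^{k−2}+1)/2, {1, p, p^k−p^{k−1}+1}) zero-difference function. -/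
lemma mem_coset_self {R : Type*} [Monoid R] (G : Subgroup Rˣ) (x : R) : x ∈ coset G x :=
  ⟨1, G.one_mem, by simp⟩

lemma coset_eq_iff {R : Type*} [Monoid R] (G : Subgroup Rˣ) (x y : R) :
    coset G y = coset G x ↔ y ∈ coset G x := by
  constructor
  · intro h; rw [← h]; exact mem_coset_self G y
  · rintro ⟨g, hg, rfl⟩
    ext z
    constructor
    · rintro ⟨h, hh, rfl⟩
      exact ⟨g * h, G.mul_mem hg hh, by rw [Units.val_mul, mul_assoc]⟩
    · rintro ⟨h, hh, rfl⟩
      refine ⟨g⁻¹ * h, G.mul_mem (G.inv_mem hg) hh, ?_⟩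
      rw [Units.val_mul, mul_assoc, Units.mul_inv_cancel_left]

/-- card of the set of multiples of `d` in `ZMod n`, where `d ∣ n`. -/
lemma ncard_dvd_set (n d : ℕ) (hn : n ≠ 0) (hd : d ∣ n) :
    {x : ZMod n | (d : ZMod n) ∣ x}.ncard = n / d := by
  haveI : NeZero n := ⟨hn⟩
  obtain ⟨c, rfl⟩ := hd
  have hd0 : d ≠ 0 := by rintro rfl; simp at hn
  have hc0 : c ≠ 0 := by rintro rfl; simp at hn
  have hset : {x : ZMod (d * c) | (d : ZMod (d * c)) ∣ x}
      = Set.range (fun t : Fin c => ((t : ℕ) * d : ℕ) : Fin c → ZMod (d * c)) := by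
    ext x
    constructor
    · rintro ⟨y, rfl⟩
      set m := y.val with hm
      refine ⟨⟨m % c, Nat.mod_lt _ (Nat.pos_of_ne_zero hc0)⟩, ?_⟩
      have h1 : (d : ZMod (d * c)) * y = ((d * m : ℕ) : ZMod (d * c)) := by
        push_cast
        rw [ZMod.natCast_val, ZMod.cast_id]
      have h2 : d * m ≡ (m % c) * d [MOD d * c] := by
        have hme : d * m = (m % c) * d + (d * c) * (m / c) := by
          have := Nat.mod_add_div m c; nlinarith [Nat.mod_add_div m c]
        unfold Nat.ModEq
        rw [hme, Nat.add_mul_mod_self_left]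
      rw [h1, ZMod.natCast_eq_natCast_iff]
      exact h2.symm
    · rintro ⟨t, rfl⟩
      simp only []
      refine ⟨((t : ℕ) : ZMod (d * c)), ?_⟩
      push_cast
      ring
  rw [hset]
  have hinj : Function.Injective (fun t : Fin c => ((t : ℕ) * d : ℕ) : Fin c → ZMod (d * c)) := by
    intro a b hab
    simp only [ZMod.natCast_eq_natCast_iff] at hab
    rw [mul_comm d c] at hab
    have := Nat.ModEq.mul_right_cancel' hd0 hab
    exact Fin.ext (by rwa [Nat.ModEq, Nat.mod_eq_of_lt a.isLt, Nat.mod_eq_of_lt b.isLt] at this)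
  rw [← Nat.card_coe_set_eq, Nat.card_range_of_injective hinj]
  simp [Nat.mul_div_cancel_left _ (Nat.pos_of_ne_zero hd0)]

lemma cast_dvd_iff (n d : ℕ) (hn : n ≠ 0) (hd : d ∣ n) (x : ZMod n) :
    (d : ZMod n) ∣ x ↔ d ∣ x.val := by
  haveI : NeZero n := ⟨hn⟩
  constructor
  · rintro ⟨t, ht⟩
    have h1 : ((d * t.val : ℕ) : ZMod n) = x := by
      push_cast
      rw [ZMod.natCast_val, ZMod.cast_id, ← ht]
    have h2 : x.val = (d * t.val) % n := by
      rw [← h1, ZMod.val_natCast]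
    rw [h2, Nat.dvd_mod_iff hd]
    exact dvd_mul_right _ _
  · rintro ⟨m, hm⟩
    refine ⟨(m : ZMod n), ?_⟩
    have h1 : ((x.val : ℕ) : ZMod n) = x := by rw [ZMod.natCast_val, ZMod.cast_id]
    rw [← h1, hm]
    push_cast
    ring

lemma dvd_unit_mul {R : Type*} [CommMonoid R] (a b z : R) (h : IsUnit a) :
    b ∣ a * z ↔ b ∣ z := by
  obtain ⟨u, rfl⟩ := h
  constructor
  · rintro ⟨t, ht⟩
    refine ⟨((u⁻¹ : Rˣ) : R) * t, ?_⟩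
    calc z = ((u⁻¹ : Rˣ) : R) * ((u : R) * z) := by rw [Units.inv_mul_cancel_left]
      _ = b * (((u⁻¹ : Rˣ) : R) * t) := by rw [ht, mul_left_comm]
  · intro h
    exact h.mul_left _

lemma pk_ne (p k : ℕ) (hp : p.Prime) : p ^ k ≠ 0 := pow_ne_zero _ hp.pos.ne'

lemma castp_pow_k (p k : ℕ) : ((p : ZMod (p^k)))^k = 0 := by
  have : (((p^k : ℕ)) : ZMod (p^k)) = 0 := ZMod.natCast_self _
  push_cast at this
  exact this

lemma q_mul_q (p k : ℕ) (hk : 2 ≤ k) :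
    ((p : ZMod (p^k)))^(k-1) * ((p : ZMod (p^k)))^(k-1) = 0 := by
  have h : (k-1) + (k-1) = k + (k-2) := by omega
  rw [← pow_add, h, pow_add, castp_pow_k p k, zero_mul]

lemma p_mul_q (p k : ℕ) (hk : 1 ≤ k) :
    (p : ZMod (p^k)) * ((p : ZMod (p^k)))^(k-1) = 0 := by
  have h : (p : ZMod (p^k)) * ((p : ZMod (p^k)))^(k-1) = ((p : ZMod (p^k)))^k := by
    rw [← pow_succ']
    congr 1
    omega
  rw [h, castp_pow_k p k]

lemma two_unit (p k : ℕ) (hp : p.Prime) (hodd : p ≠ 2) : IsUnit (2 : ZMod (p^k)) := by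
  haveI : NeZero (p^k) := ⟨pk_ne p k hp⟩
  have h2 : ((2 : ℕ) : ZMod (p^k)) = (2 : ZMod (p^k)) := by push_cast; ring
  rw [← h2, ZMod.isUnit_iff_coprime]
  exact Nat.Coprime.pow_right _ ((Nat.coprime_primes Nat.prime_two hp).mpr (Ne.symm hodd))

lemma nonunit_iff (p k : ℕ) (hp : p.Prime) (hk : 1 ≤ k) (x : ZMod (p^k)) :
    ¬ IsUnit x ↔ (p : ZMod (p^k)) ∣ x := by
  haveI : NeZero (p^k) := ⟨pk_ne p k hp⟩
  have h1 : ((x.val : ℕ) : ZMod (p^k)) = x := by rw [ZMod.natCast_val, ZMod.cast_id]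
  have h2 := ZMod.isUnit_iff_coprime x.val (p^k)
  rw [h1] at h2
  rw [cast_dvd_iff _ p (pk_ne p k hp) (dvd_pow_self p (by omega : k ≠ 0)) x, h2,
      Nat.coprime_pow_right_iff (by omega : 0 < k), Nat.coprime_comm,
      Nat.Prime.coprime_iff_not_dvd hp]
  tauto

lemma q_dvd_imp_p_dvd (p k : ℕ) (hk : 2 ≤ k) (x : ZMod (p^k))
    (h : ((p : ZMod (p^k)))^(k-1) ∣ x) : (p : ZMod (p^k)) ∣ x := by
  refine dvd_trans ?_ h
  refine ⟨((p : ZMod (p^k)))^(k-2), ?_⟩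
  rw [← pow_succ']
  congr 1
  omega

lemma int_p_dvd_mul_q (p k : ℕ) (hk : 1 ≤ k) (c : ℤ) (hc : (p : ℤ) ∣ c) :
    ((c : ZMod (p^k))) * ((p : ZMod (p^k)))^(k-1) = 0 := by
  obtain ⟨d, rfl⟩ := hc
  push_cast
  rw [mul_assoc, mul_comm ((d : ZMod (p^k))), ← mul_assoc, p_mul_q p k hk, zero_mul]

lemma qz_zero_iff (p k : ℕ) (hp : p.Prime) (hk : 1 ≤ k) (z : ZMod (p^k)) :
    ((p : ZMod (p^k)))^(k-1) * z = 0 ↔ (p : ZMod (p^k)) ∣ z := by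
  haveI : NeZero (p^k) := ⟨pk_ne p k hp⟩
  constructor
  · intro h
    have h1 : ((z.val : ℕ) : ZMod (p^k)) = z := by rw [ZMod.natCast_val, ZMod.cast_id]
    have h2 : ((p^(k-1) * z.val : ℕ) : ZMod (p^k)) = 0 := by
      push_cast
      rw [h1]; exact h
    rw [ZMod.natCast_eq_zero_iff] at h2
    have h3 : p^(k-1) * p ∣ p^(k-1) * z.val := by
      have hh : p^(k-1) * p = p^k := by rw [← pow_succ]; congr 1; omega
      rwa [hh]
    have h4 : p ∣ z.val := (mul_dvd_mul_iff_left (pow_ne_zero (k-1) hp.pos.ne')).mp h3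
    rw [cast_dvd_iff _ p (pk_ne p k hp) (dvd_pow_self p (by omega : k ≠ 0)) z]
    exact h4
  · rintro ⟨w, rfl⟩
    rw [← mul_assoc, mul_comm (((p : ZMod (p^k)))^(k-1)), p_mul_q p k hk, zero_mul]



lemma epow_even (p k : ℕ) (hk : 2 ≤ k) (e : (ZMod (p^k))ˣ)
    (he : (e : ZMod (p^k)) = (p : ZMod (p^k))^(k-1) - 1) (j : ℕ) :
    ((e : ZMod (p^k)))^(2*j) = 1 - 2*(j : ZMod (p^k))*(p : ZMod (p^k))^(k-1) := by
  induction j with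
  | zero => simp
  | succ j ih =>
    have h1 : 2*(j+1) = 2*j + 2 := by ring
    rw [h1, pow_add, ih, pow_two, he]
    push_cast
    linear_combination (1 + 4*(j : ZMod (p^k))
      - 2*(j : ZMod (p^k))*(p : ZMod (p^k))^(k-1)) * q_mul_q p k hk

lemma epow_odd (p k : ℕ) (hk : 2 ≤ k) (e : (ZMod (p^k))ˣ)
    (he : (e : ZMod (p^k)) = (p : ZMod (p^k))^(k-1) - 1) (j : ℕ) :
    ((e : ZMod (p^k)))^(2*j+1) = -1 + (2*(j : ZMod (p^k))+1)*(p : ZMod (p^k))^(k-1) := by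
  rw [pow_succ, epow_even p k hk e he j, he]
  linear_combination (-2*(j : ZMod (p^k))) * q_mul_q p k hk



lemma epow_p (p k : ℕ) (hp : p.Prime) (hodd : p ≠ 2) (hk : 2 ≤ k) (e : (ZMod (p^k))ˣ)
    (he : (e : ZMod (p^k)) = (p : ZMod (p^k))^(k-1) - 1) :
    ((e : ZMod (p^k)))^p = -1 := by
  have hpodd : p % 2 = 1 := Nat.odd_iff.mp (hp.odd_of_ne_two hodd)
  have hj : p = 2*(p/2)+1 := by omega
  have hcast : 2*(((p/2) : ℕ) : ZMod (p^k)) + 1 = (p : ZMod (p^k)) := by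
    have h2 := congrArg (fun t : ℕ => (t : ZMod (p^k))) hj
    push_cast at h2
    exact h2.symm
  calc ((e : ZMod (p^k)))^p = ((e : ZMod (p^k)))^(2*(p/2)+1) := by rw [← hj]
    _ = -1 + (2*(((p/2) : ℕ) : ZMod (p^k))+1)*(p : ZMod (p^k))^(k-1) :=
        epow_odd p k hk e he (p/2)
    _ = -1 := by rw [hcast, p_mul_q p k (by omega)]; ring

lemma e_pow_2p (p k : ℕ) (hp : p.Prime) (hodd : p ≠ 2) (hk : 2 ≤ k) (e : (ZMod (p^k))ˣ)
    (he : (e : ZMod (p^k)) = (p : ZMod (p^k))^(k-1) - 1) :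
    e^(2*p) = 1 := by
  apply Units.ext
  rw [Units.val_pow_eq_pow_val, Units.val_one, mul_comm 2 p, pow_mul,
    epow_p p k hp hodd hk e he]
  ring

lemma mem_G_iff (p k : ℕ) (hp : p.Prime) (hodd : p ≠ 2) (hk : 2 ≤ k) (e : (ZMod (p^k))ˣ)
    (he : (e : ZMod (p^k)) = (p : ZMod (p^k))^(k-1) - 1) (g : (ZMod (p^k))ˣ) :
    g ∈ Subgroup.zpowers e ↔ ∃ t : ZMod (p^k),
      ((g : ZMod (p^k)) = 1 + t*(p : ZMod (p^k))^(k-1) ∨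
       (g : ZMod (p^k)) = -1 + t*(p : ZMod (p^k))^(k-1)) := by
  haveI : Fact p.Prime := ⟨hp⟩
  rw [Subgroup.mem_zpowers_iff]
  constructor
  · rintro ⟨n, rfl⟩
    set N : ℕ := 2*p with hN
    have hNpos : (0:ℤ) < (N:ℤ) := by
      have := hp.two_le; positivity
    set m : ℕ := (n % (N:ℤ)).toNat with hm
    have hzp : e^n = e^m := by
      have hsplit : (N:ℤ) * (n / (N:ℤ)) + n % (N:ℤ) = n := Int.mul_ediv_add_emod n N
      calc e^n = e^((N:ℤ)*(n/(N:ℤ)) + n%(N:ℤ)) := by rw [hsplit]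
        _ = (e^(N:ℤ))^(n/(N:ℤ)) * e^(n%(N:ℤ)) := by rw [zpow_add, zpow_mul]
        _ = e^(n%(N:ℤ)) := by
            rw [zpow_natCast, e_pow_2p p k hp hodd hk e he, one_zpow, one_mul]
        _ = e^((m:ℤ)) := by rw [hm, Int.toNat_of_nonneg (Int.emod_nonneg n hNpos.ne')]
        _ = e^m := zpow_natCast e m
    have hval : ((e^n : (ZMod (p^k))ˣ) : ZMod (p^k)) = ((e : ZMod (p^k)))^m := by
      rw [hzp, Units.val_pow_eq_pow_val]
    rcases Nat.even_or_odd m with ⟨j, hj⟩ | ⟨j, hj⟩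
    · refine ⟨-(2*(j : ZMod (p^k))), Or.inl ?_⟩
      rw [hval, show m = 2*j by omega, epow_even p k hk e he]
      ring
    · refine ⟨2*(j : ZMod (p^k))+1, Or.inr ?_⟩
      rw [hval, hj, epow_odd p k hk e he]
  · have h2ne : (2 : ZMod p) ≠ 0 := by
      intro h
      have h2 : ((2:ℕ) : ZMod p) = 0 := by exact_mod_cast h
      have := (ZMod.natCast_eq_zero_iff 2 p).mp h2
      exact hodd ((Nat.prime_dvd_prime_iff_eq hp Nat.prime_two).mp this)
    rintro ⟨t, ht | ht⟩
    · set m : ℕ := t.val with hmdef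
      have hm : ((m : ℕ) : ZMod (p^k)) = t := by rw [ZMod.natCast_val, ZMod.cast_id]
      set z : ZMod p := (-(m : ZMod p)) * (2 : ZMod p)⁻¹ with hzdef
      set j : ℕ := z.val with hjdef
      have hjz : ((j:ℕ) : ZMod p) = z := by rw [ZMod.natCast_val, ZMod.cast_id]
      have h2z : (2 : ZMod p) * z = -(m : ZMod p) := by
        rw [hzdef, mul_comm, mul_assoc, inv_mul_cancel₀ h2ne, mul_one]
      have hz : ((2*j + m : ℕ) : ZMod p) = 0 := by
        push_cast
        rw [hjz]
        linear_combination h2z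
      have hdvd : p ∣ 2*j+m := (ZMod.natCast_eq_zero_iff _ p).mp hz
      have hq0 := int_p_dvd_mul_q p k (by omega) ((2*j+m : ℕ) : ℤ)
        (Int.natCast_dvd_natCast.mpr hdvd)
      push_cast at hq0
      refine ⟨((2*j : ℕ) : ℤ), ?_⟩
      apply Units.ext
      rw [zpow_natCast, Units.val_pow_eq_pow_val, epow_even p k hk e he, ht]
      linear_combination -hq0 + (p : ZMod (p^k))^(k-1) * hm
    · set m : ℕ := t.val with hmdef
      have hm : ((m : ℕ) : ZMod (p^k)) = t := by rw [ZMod.natCast_val, ZMod.cast_id]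
      set z : ZMod p := ((m : ZMod p) - 1) * (2 : ZMod p)⁻¹ with hzdef
      set j : ℕ := z.val with hjdef
      have hjz : ((j:ℕ) : ZMod p) = z := by rw [ZMod.natCast_val, ZMod.cast_id]
      have h2z : (2 : ZMod p) * z = (m : ZMod p) - 1 := by
        rw [hzdef, mul_comm, mul_assoc, inv_mul_cancel₀ h2ne, mul_one]
      have hz : ((2*j + 1 : ℕ) : ZMod p) = ((m : ℕ) : ZMod p) := by
        push_cast
        rw [hjz]
        linear_combination h2z
      have hdvd : (p:ℤ) ∣ (m:ℤ) - ((2*j+1 : ℕ):ℤ) := by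
        have := (ZMod.natCast_eq_natCast_iff _ _ _).mp hz
        exact_mod_cast this.dvd
      have hq0 := int_p_dvd_mul_q p k (by omega) _ hdvd
      push_cast at hq0
      refine ⟨((2*j+1 : ℕ) : ℤ), ?_⟩
      apply Units.ext
      rw [zpow_natCast, Units.val_pow_eq_pow_val, epow_odd p k hk e he, ht]
      linear_combination -hq0 + (p : ZMod (p^k))^(k-1) * hm

lemma isUnit_pm (p k : ℕ) (hp : p.Prime) (hk : 2 ≤ k) (a t : ZMod (p^k))
    (ha : a = 1 ∨ a = -1) : IsUnit (a + t*(p : ZMod (p^k))^(k-1)) := by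
  by_contra h
  rw [nonunit_iff p k hp (by omega)] at h
  have hpq : (p : ZMod (p^k)) ∣ t*(p : ZMod (p^k))^(k-1) :=
    (dvd_pow_self (p : ZMod (p^k)) (by omega : k-1 ≠ 0)).mul_left t
  have hpa : (p : ZMod (p^k)) ∣ a := by
    have := dvd_sub h hpq
    simpa using this
  have hp1 : (p : ZMod (p^k)) ∣ 1 := by
    rcases ha with rfl | rfl
    · exact hpa
    · exact (dvd_neg).mp hpa
  have : ¬ IsUnit (1 : ZMod (p^k)) := by
    rw [nonunit_iff p k hp (by omega)]
    exact hp1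
  exact this isUnit_one

lemma mem_coset_unit (p k : ℕ) (hp : p.Prime) (hodd : p ≠ 2) (hk : 2 ≤ k)
    (e : (ZMod (p^k))ˣ) (he : (e : ZMod (p^k)) = (p : ZMod (p^k))^(k-1) - 1)
    (x : ZMod (p^k)) (hx : IsUnit x) (y : ZMod (p^k)) :
    y ∈ coset (Subgroup.zpowers e) x ↔
      ((p : ZMod (p^k))^(k-1) ∣ y - x ∨ (p : ZMod (p^k))^(k-1) ∣ y + x) := by
  constructor
  · rintro ⟨g, hg, rfl⟩
    obtain ⟨t, ht | ht⟩ := (mem_G_iff p k hp hodd hk e he g).mp hg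
    · left; rw [ht]; exact ⟨x*t, by ring⟩
    · right; rw [ht]; exact ⟨x*t, by ring⟩
  · obtain ⟨u, rfl⟩ := hx
    have huv : ((u : ZMod (p^k))) * ((u⁻¹ : (ZMod (p^k))ˣ) : ZMod (p^k)) = 1 :=
      u.mul_inv
    rintro (⟨s, hs⟩ | ⟨s, hs⟩)
    · obtain ⟨g, hgval⟩ := isUnit_pm p k hp hk 1 (((u⁻¹ : (ZMod (p^k))ˣ) : ZMod (p^k)) * s)
        (Or.inl rfl)
      refine ⟨g, (mem_G_iff p k hp hodd hk e he g).mpr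
        ⟨((u⁻¹ : (ZMod (p^k))ˣ) : ZMod (p^k)) * s, Or.inl (by rw [hgval])⟩, ?_⟩
      rw [hgval]
      linear_combination hs - s*(p : ZMod (p^k))^(k-1)*huv
    · obtain ⟨g, hgval⟩ := isUnit_pm p k hp hk (-1) (((u⁻¹ : (ZMod (p^k))ˣ) : ZMod (p^k)) * s)
        (Or.inr rfl)
      refine ⟨g, (mem_G_iff p k hp hodd hk e he g).mpr
        ⟨((u⁻¹ : (ZMod (p^k))ˣ) : ZMod (p^k)) * s, Or.inr (by rw [hgval])⟩, ?_⟩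
      rw [hgval]
      linear_combination hs - s*(p : ZMod (p^k))^(k-1)*huv

lemma coset_nonunit (p k : ℕ) (hp : p.Prime) (hodd : p ≠ 2) (hk : 2 ≤ k)
    (e : (ZMod (p^k))ˣ) (he : (e : ZMod (p^k)) = (p : ZMod (p^k))^(k-1) - 1)
    (x : ZMod (p^k)) (hx : ¬ IsUnit x) :
    coset (Subgroup.zpowers e) x = {x, -x} := by
  obtain ⟨w, hw⟩ := (nonunit_iff p k hp (by omega) x).mp hx
  have hxq : x * (p : ZMod (p^k))^(k-1) = 0 := by
    rw [hw, mul_assoc, mul_comm w, ← mul_assoc, p_mul_q p k (by omega), zero_mul]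
  ext y
  simp only [Set.mem_insert_iff, Set.mem_singleton_iff]
  constructor
  · rintro ⟨g, hg, rfl⟩
    obtain ⟨t, ht | ht⟩ := (mem_G_iff p k hp hodd hk e he g).mp hg
    · left; rw [ht]; linear_combination t*hxq
    · right; rw [ht]; linear_combination t*hxq
  · have hmem : e^p ∈ Subgroup.zpowers e := ⟨(p : ℤ), by simp [zpow_natCast]⟩
    have hval : ((e^p : (ZMod (p^k))ˣ) : ZMod (p^k)) = -1 := by
      rw [Units.val_pow_eq_pow_val, epow_p p k hp hodd hk e he]
    rintro (rfl | rfl)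
    · exact mem_coset_self _ _
    · exact ⟨e^p, hmem, by rw [hval]; ring⟩

lemma trans_count (p k : ℕ) (hp : p.Prime) (hk : 2 ≤ k) (β : ZMod (p^k)) :
    {y : ZMod (p^k) | (p : ZMod (p^k))^(k-1) ∣ y + β}.ncard = p := by
  have hcast : ((p^(k-1) : ℕ) : ZMod (p^k)) = (p : ZMod (p^k))^(k-1) := by push_cast; ring
  have hD := ncard_dvd_set (p^k) (p^(k-1)) (pk_ne p k hp) (pow_dvd_pow p (by omega))
  rw [hcast] at hD
  rw [Nat.pow_div (by omega) hp.pos, show k - (k-1) = 1 by omega, pow_one] at hD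
  have himg : {y : ZMod (p^k) | (p : ZMod (p^k))^(k-1) ∣ y + β}
      = (fun z : ZMod (p^k) => z - β) '' {z : ZMod (p^k) | (p : ZMod (p^k))^(k-1) ∣ z} := by
    ext y
    simp only [Set.mem_image, Set.mem_setOf_eq]
    constructor
    · intro hy; exact ⟨y + β, hy, by ring⟩
    · rintro ⟨z, hz, rfl⟩; simpa using hz
  have hinj : Function.Injective (fun z : ZMod (p^k) => z - β) := by
    intro a b h
    have := congrArg (fun t => t + β) h
    simpa using this
  rw [himg, Set.ncard_image_of_injective _ hinj, hD]

theorem stmt_10 (p : ℕ) (hp : p.Prime) (hodd : p ≠ 2) (k : ℕ) (hk : 2 < k)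
    (e : (ZMod (p ^ k))ˣ)
    (he : (e : ZMod (p ^ k)) = (p : ZMod (p ^ k)) ^ (k - 1) - 1) :
    {S : Set (ZMod (p ^ k)) | ∃ x : ZMod (p ^ k), S = coset (Subgroup.zpowers e) x}.ncard
        = (2 * p ^ (k - 1) - p ^ (k - 2) + 1) / 2 ∧
      ∀ α : ZMod (p ^ k), α ≠ 0 →
        ((p : ZMod (p ^ k)) ^ (k - 1) ∣ α →
          {x : ZMod (p ^ k) |
            coset (Subgroup.zpowers e) (x + α) = coset (Subgroup.zpowers e) x}.ncard
            = p ^ k - p ^ (k - 1) + 1) ∧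
        (¬ (p : ZMod (p ^ k)) ∣ α →
          {x : ZMod (p ^ k) |
            coset (Subgroup.zpowers e) (x + α) = coset (Subgroup.zpowers e) x}.ncard = p) ∧
        ((p : ZMod (p ^ k)) ∣ α → ¬ (p : ZMod (p ^ k)) ^ (k - 1) ∣ α →
          {x : ZMod (p ^ k) |
            coset (Subgroup.zpowers e) (x + α) = coset (Subgroup.zpowers e) x}.ncard = 1) := by
  classical
  haveI : NeZero (p^k) := ⟨pk_ne p k hp⟩
  have hk2 : 2 ≤ k := by omega
  obtain ⟨u2, hu2⟩ := two_unit p k hp hodd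
  have h21 : ((u2⁻¹ : (ZMod (p^k))ˣ) : ZMod (p^k)) * 2 = 1 := by
    rw [← hu2]; exact u2.inv_mul
  have h12 : (2 : ZMod (p^k)) * ((u2⁻¹ : (ZMod (p^k))ˣ) : ZMod (p^k)) = 1 := by
    rw [← hu2]; exact u2.mul_inv
  -- the units set
  have hDcard : {x : ZMod (p^k) | (p : ZMod (p^k)) ∣ x}.ncard = p^(k-1) := by
    have hD := ncard_dvd_set (p^k) p (pk_ne p k hp) (dvd_pow_self p (by omega))
    have hpk : p^k = p^(k-1) * p := by rw [← pow_succ]; congr 1; omega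
    rw [hD, hpk, Nat.mul_div_cancel _ hp.pos]
  have hUcompl : {x : ZMod (p^k) | IsUnit x} = {x : ZMod (p^k) | (p : ZMod (p^k)) ∣ x}ᶜ := by
    ext x
    simp only [Set.mem_compl_iff, Set.mem_setOf_eq]
    rw [← nonunit_iff p k hp (by omega)]
    tauto
  have hUcard : {x : ZMod (p^k) | IsUnit x}.ncard = p^k - p^(k-1) := by
    have hsum := Set.ncard_add_ncard_compl {x : ZMod (p^k) | (p : ZMod (p^k)) ∣ x}
    rw [hDcard, Nat.card_zmod] at hsum
    have hle : p^(k-1) ≤ p^k := Nat.pow_le_pow_right hp.pos (by omega)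
    rw [hUcompl]
    omega
  constructor
  · -- part (i): counting cosets
    haveI : Fact (1 < p^k) := ⟨by
      have h2 := hp.two_le
      calc 1 < p := by omega
        _ ≤ p^k := Nat.le_self_pow (by omega) p⟩
    set C : ZMod (p^k) → Set (ZMod (p^k)) := fun x => coset (Subgroup.zpowers e) x with hC
    have hne_neg : ∀ x : ZMod (p^k), x ≠ 0 → x ≠ -x := by
      intro x hx0 hxe
      apply hx0
      have h2x : 2*x = 0 := by linear_combination hxe
      calc x = (((u2⁻¹ : (ZMod (p^k))ˣ) : ZMod (p^k))*2)*x := by rw [h21, one_mul]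
        _ = ((u2⁻¹ : (ZMod (p^k))ˣ) : ZMod (p^k))*(2*x) := by ring
        _ = 0 := by rw [h2x, mul_zero]
    have hcosetU : ∀ x : ZMod (p^k), IsUnit x → (C x).ncard = 2*p := by
      intro x hxu
      have hsplit : C x
          = {y | (p : ZMod (p^k))^(k-1) ∣ y + (-x)} ∪ {y | (p : ZMod (p^k))^(k-1) ∣ y + x} := by
        ext y
        rw [hC]
        rw [show (fun x => coset (Subgroup.zpowers e) x) x = coset (Subgroup.zpowers e) x from rfl]
        rw [mem_coset_unit p k hp hodd hk2 e he x hxu]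
        simp only [Set.mem_union, Set.mem_setOf_eq, ← sub_eq_add_neg]
      have hdis : Disjoint {y : ZMod (p^k) | (p : ZMod (p^k))^(k-1) ∣ y + (-x)}
          {y : ZMod (p^k) | (p : ZMod (p^k))^(k-1) ∣ y + x} := by
        rw [Set.disjoint_left]
        rintro y hy1 hy2
        simp only [Set.mem_setOf_eq] at hy1 hy2
        have hsub := dvd_sub hy2 hy1
        have heq : (y + x) - (y + -x) = 2*x := by ring
        rw [heq] at hsub
        have hpx : (p : ZMod (p^k)) ∣ x :=
          (dvd_unit_mul _ _ _ ⟨u2, hu2⟩).mp (q_dvd_imp_p_dvd p k hk2 _ hsub)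
        exact ((nonunit_iff p k hp (by omega) x).mpr hpx) hxu
      rw [hsplit, Set.ncard_union_eq hdis, trans_count p k hp hk2, trans_count p k hp hk2]
      ring
    have hcosetN : ∀ x : ZMod (p^k), ¬IsUnit x → x ≠ 0 → (C x).ncard = 2 := by
      intro x hxu hx0
      rw [hC]
      rw [show (fun x => coset (Subgroup.zpowers e) x) x = coset (Subgroup.zpowers e) x from rfl]
      rw [coset_nonunit p k hp hodd hk2 e he x hxu]
      exact Set.ncard_pair (hne_neg x hx0)
    have hCeq : ∀ x y : ZMod (p^k), C y = C x ↔ y ∈ C x := fun x y => coset_eq_iff _ x y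
    have hC0 : C 0 = {0} := by
      ext y
      simp only [hC, coset, Set.mem_setOf_eq, Set.mem_singleton_iff]
      constructor
      · rintro ⟨g, hg, rfl⟩; rw [zero_mul]
      · rintro rfl; exact ⟨1, Subgroup.one_mem _, by simp⟩
    have hrange : {S : Set (ZMod (p^k)) | ∃ x, S = C x}
        = (C '' {x | IsUnit x} ∪ C '' {x | ¬IsUnit x ∧ x ≠ 0}) ∪ {C 0} := by
      ext S
      simp only [Set.mem_setOf_eq, Set.mem_union, Set.mem_image, Set.mem_singleton_iff]
      constructor
      · rintro ⟨x, rfl⟩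
        by_cases hxu : IsUnit x
        · exact Or.inl (Or.inl ⟨x, hxu, rfl⟩)
        · by_cases hx0 : x = 0
          · subst hx0; exact Or.inr rfl
          · exact Or.inl (Or.inr ⟨x, ⟨hxu, hx0⟩, rfl⟩)
      · rintro ((⟨x, _, rfl⟩ | ⟨x, _, rfl⟩) | rfl)
        exacts [⟨x, rfl⟩, ⟨x, rfl⟩, ⟨0, rfl⟩]
    have hd1 : Disjoint (C '' {x | IsUnit x}) (C '' {x | ¬IsUnit x ∧ x ≠ 0}) := by
      rw [Set.disjoint_left]
      rintro S ⟨x, hxu, rfl⟩ ⟨y, ⟨hyu, hy0⟩, hCy⟩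
      have hx : x ∈ C y := by rw [hCy]; exact mem_coset_self _ _
      rw [hC] at hx
      rw [show (fun x => coset (Subgroup.zpowers e) x) y = coset (Subgroup.zpowers e) y from rfl]
        at hx
      rw [coset_nonunit p k hp hodd hk2 e he y hyu] at hx
      simp only [Set.mem_insert_iff, Set.mem_singleton_iff] at hx
      rcases hx with rfl | rfl
      · exact hyu hxu
      · exact hyu (IsUnit.neg_iff y |>.mp (by simpa using hxu))
    have hd2 : Disjoint (C '' {x | IsUnit x}) ({C 0} : Set (Set (ZMod (p^k)))) := by
      rw [Set.disjoint_left]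
      rintro S ⟨x, hxu, rfl⟩ hS0
      rw [Set.mem_singleton_iff] at hS0
      have hx : x ∈ C 0 := by rw [← hS0]; exact mem_coset_self _ _
      rw [hC0] at hx
      exact hxu.ne_zero (by simpa using hx)
    have hd3 : Disjoint (C '' {x | ¬IsUnit x ∧ x ≠ 0}) ({C 0} : Set (Set (ZMod (p^k)))) := by
      rw [Set.disjoint_left]
      rintro S ⟨x, ⟨hxu, hx0⟩, rfl⟩ hS0
      rw [Set.mem_singleton_iff] at hS0
      have hx : x ∈ C 0 := by rw [← hS0]; exact mem_coset_self _ _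
      rw [hC0] at hx
      exact hx0 (by simpa using hx)
    have hcount : ∀ (A : Set (ZMod (p^k))) (c : ℕ),
        (∀ x ∈ A, (C x).ncard = c) →
        (∀ x ∈ A, ∀ y, y ∈ C x → y ∈ A) →
        (C '' A).ncard * c = A.ncard := by
      intro A c hsize hclosed
      have h1 := Finset.card_eq_sum_card_image C A.toFinset
      have h2 : ∀ S ∈ A.toFinset.image C, (A.toFinset.filter (fun a => C a = S)).card = c := by
        intro S hS
        obtain ⟨x, hxA, rfl⟩ := Finset.mem_image.mp hS
        have hxA' : x ∈ A := Set.mem_toFinset.mp hxA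
        have hfil : (A.toFinset.filter (fun a => C a = C x)) = (C x).toFinset := by
          ext y
          simp only [Finset.mem_filter, Set.mem_toFinset]
          constructor
          · rintro ⟨_, hCy⟩; exact (hCeq x y).mp hCy
          · intro hy; exact ⟨hclosed x hxA' y hy, (hCeq x y).mpr hy⟩
        rw [hfil, ← Set.ncard_eq_toFinset_card']
        exact hsize x hxA'
      have h3 : A.toFinset.card = (A.toFinset.image C).card * c := by
        rw [h1]; exact Finset.sum_const_nat h2
      have h4 : (C '' A).ncard = (A.toFinset.image C).card := by
        rw [← Set.ncard_coe_finset]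
        congr 1
        rw [Finset.coe_image, Set.coe_toFinset]
      rw [h4, Set.ncard_eq_toFinset_card' A]
      omega
    have hclosedU : ∀ x ∈ {x : ZMod (p^k) | IsUnit x}, ∀ y, y ∈ C x → y ∈ {x : ZMod (p^k) | IsUnit x} := by
      rintro x hx y ⟨g, hg, rfl⟩
      exact hx.mul g.isUnit
    have hclosedN : ∀ x ∈ {x : ZMod (p^k) | ¬IsUnit x ∧ x ≠ 0}, ∀ y, y ∈ C x
        → y ∈ {x : ZMod (p^k) | ¬IsUnit x ∧ x ≠ 0} := by
      rintro x ⟨hxu, hx0⟩ y hy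
      rw [hC] at hy
      rw [show (fun x => coset (Subgroup.zpowers e) x) x = coset (Subgroup.zpowers e) x from rfl]
        at hy
      rw [coset_nonunit p k hp hodd hk2 e he x hxu] at hy
      simp only [Set.mem_insert_iff, Set.mem_singleton_iff] at hy
      rcases hy with rfl | rfl
      · exact ⟨hxu, hx0⟩
      · refine ⟨fun hu => hxu ((IsUnit.neg_iff x).mp hu), neg_ne_zero.mpr hx0⟩
    have hUc := hcount {x | IsUnit x} (2*p) (fun x hx => hcosetU x hx) hclosedU
    have hNcard : {x : ZMod (p^k) | ¬IsUnit x ∧ x ≠ 0}.ncard = p^(k-1) - 1 := by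
      have hsetN : {x : ZMod (p^k) | ¬IsUnit x ∧ x ≠ 0}
          = {x : ZMod (p^k) | (p : ZMod (p^k)) ∣ x} \ {0} := by
        ext x
        simp only [Set.mem_setOf_eq, Set.mem_diff, Set.mem_singleton_iff,
          nonunit_iff p k hp (by omega : 1 ≤ k)]
      rw [hsetN, Set.ncard_diff_singleton_of_mem (by exact dvd_zero _), hDcard]
    have hNc := hcount {x | ¬IsUnit x ∧ x ≠ 0} 2
      (fun x hx => hcosetN x hx.1 hx.2) hclosedN
    rw [hUcard] at hUc
    rw [hNcard] at hNc
    rw [hrange, Set.ncard_union_eq (by rw [Set.disjoint_union_left]; exact ⟨hd2, hd3⟩),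
      Set.ncard_union_eq hd1, Set.ncard_singleton]
    -- arithmetic
    have hpow1 : p * p^(k-1) = p^k := by rw [← pow_succ']; congr 1; omega
    have hpow2 : p * p^(k-2) = p^(k-1) := by rw [← pow_succ']; congr 1; omega
    have hA2 : 2 * (C '' {x | IsUnit x}).ncard = p^(k-1) - p^(k-2) := by
      apply Nat.eq_of_mul_eq_mul_left hp.pos
      rw [Nat.mul_sub, hpow1, hpow2, ← hUc]
      ring
    have haodd : p^(k-2) % 2 = 1 :=
      Nat.odd_iff.mp ((hp.odd_of_ne_two hodd).pow)
    have hble : p^(k-2) ≤ p^(k-1) := Nat.pow_le_pow_right hp.pos (by omega)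
    have hb1 : 1 ≤ p^(k-1) := Nat.one_le_pow _ _ hp.pos
    omega
  · intro α hα
    have hE : {x : ZMod (p^k) | coset (Subgroup.zpowers e) (x + α) = coset (Subgroup.zpowers e) x}
        = {x : ZMod (p^k) | x + α ∈ coset (Subgroup.zpowers e) x} := by
      ext x
      exact coset_eq_iff _ _ _
    refine ⟨?_, ?_, ?_⟩
    · -- case 1 : q ∣ α
      intro hqα
      set c : ZMod (p^k) := -(((u2⁻¹ : (ZMod (p^k))ˣ) : ZMod (p^k)) * α) with hc
      have hpα : (p : ZMod (p^k)) ∣ α := q_dvd_imp_p_dvd p k hk2 α hqα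
      have hpc : (p : ZMod (p^k)) ∣ c := (Dvd.dvd.mul_left hpα _).neg_right
      have hcnon : ¬ IsUnit c := (nonunit_iff p k hp (by omega) c).mpr hpc
      rw [hE]
      have hset : {x : ZMod (p^k) | x + α ∈ coset (Subgroup.zpowers e) x}
          = {x : ZMod (p^k) | IsUnit x} ∪ {c} := by
        ext x
        simp only [Set.mem_setOf_eq, Set.mem_union, Set.mem_singleton_iff]
        by_cases hx : IsUnit x
        · constructor
          · intro _; exact Or.inl hx
          · intro _
            rw [mem_coset_unit p k hp hodd hk2 e he x hx]
            left
            have : x + α - x = α := by ring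
            rw [this]
            exact hqα
        · rw [coset_nonunit p k hp hodd hk2 e he x hx]
          simp only [Set.mem_insert_iff, Set.mem_singleton_iff]
          constructor
          · rintro (h1 | h2)
            · exfalso; apply hα; linear_combination h1
            · right
              rw [hc]
              linear_combination (((u2⁻¹ : (ZMod (p^k))ˣ) : ZMod (p^k))) * h2 - x * h12
          · rintro (h1 | rfl)
            · exact absurd h1 hx
            · right
              rw [hc]
              linear_combination 2*hc - α * h12
      rw [hset, Set.ncard_union_eq (by
        rw [Set.disjoint_left]
        intro a ha hac
        rw [Set.mem_singleton_iff] at hac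
        exact hcnon (hac ▸ ha)), hUcard, Set.ncard_singleton]
    · -- case 2 : ¬ p ∣ α
      intro hpα
      rw [hE]
      set β : ZMod (p^k) := ((u2⁻¹ : (ZMod (p^k))ˣ) : ZMod (p^k)) * α with hβ
      have hset : {x : ZMod (p^k) | x + α ∈ coset (Subgroup.zpowers e) x}
          = {x : ZMod (p^k) | (p : ZMod (p^k))^(k-1) ∣ x + β} := by
        ext x
        simp only [Set.mem_setOf_eq]
        by_cases hx : IsUnit x
        · rw [mem_coset_unit p k hp hodd hk2 e he x hx]
          have hsub : x + α - x = α := by ring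
          have hadd : x + α + x = 2*(x + β) := by
            linear_combination -α * h12 - 2 * hβ
          rw [hsub, hadd]
          constructor
          · rintro (h1 | h2)
            · exact absurd (q_dvd_imp_p_dvd p k hk2 α h1) hpα
            · exact (dvd_unit_mul _ _ _ ⟨u2, hu2⟩).mp h2
          · intro h
            exact Or.inr ((dvd_unit_mul _ _ _ ⟨u2, hu2⟩).mpr h)
        · rw [coset_nonunit p k hp hodd hk2 e he x hx]
          simp only [Set.mem_insert_iff, Set.mem_singleton_iff]
          have hpx : (p : ZMod (p^k)) ∣ x := (nonunit_iff p k hp (by omega) x).mp hx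
          constructor
          · rintro (h1 | h2)
            · exfalso; apply hpα
              have : α = 0 := by linear_combination h1
              rw [this]
              exact dvd_zero _
            · exfalso; apply hpα
              have : α = -(2*x) := by linear_combination h2
              rw [this]
              exact ((hpx.mul_left 2).neg_right)
          · intro h
            exfalso
            have hpxb : (p : ZMod (p^k)) ∣ x + β :=
              q_dvd_imp_p_dvd p k hk2 _ h
            have hpβ : (p : ZMod (p^k)) ∣ β := by
              have := dvd_sub hpxb hpx
              simpa using this
            apply hpα
            have : α = 2 * β := by linear_combination -α * h12 - 2 * hβ
            rw [this]
            exact hpβ.mul_left 2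
      rw [hset, trans_count p k hp hk2 β]
    · -- case 3 : p ∣ α, ¬ q ∣ α
      intro hpα hnq
      rw [hE]
      set c : ZMod (p^k) := -(((u2⁻¹ : (ZMod (p^k))ˣ) : ZMod (p^k)) * α) with hc
      have hpc : (p : ZMod (p^k)) ∣ c := (Dvd.dvd.mul_left hpα _).neg_right
      have hcnon : ¬ IsUnit c := (nonunit_iff p k hp (by omega) c).mpr hpc
      have hset : {x : ZMod (p^k) | x + α ∈ coset (Subgroup.zpowers e) x} = {c} := by
        ext x
        simp only [Set.mem_setOf_eq, Set.mem_singleton_iff]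
        by_cases hx : IsUnit x
        · rw [mem_coset_unit p k hp hodd hk2 e he x hx]
          have hsub : x + α - x = α := by ring
          have hadd : x + α + x = 2*x + α := by ring
          rw [hsub, hadd]
          constructor
          · rintro (h1 | h2)
            · exact absurd h1 hnq
            · exfalso
              have hp2x : (p : ZMod (p^k)) ∣ 2*x := by
                have := dvd_sub (q_dvd_imp_p_dvd p k hk2 _ h2) hpα
                simpa using this
              have hpx : (p : ZMod (p^k)) ∣ x := (dvd_unit_mul _ _ _ ⟨u2, hu2⟩).mp hp2x
              exact ((nonunit_iff p k hp (by omega) x).mpr hpx) hx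
          · intro hxc
            exact absurd hx (hxc ▸ hcnon)
        · rw [coset_nonunit p k hp hodd hk2 e he x hx]
          simp only [Set.mem_insert_iff, Set.mem_singleton_iff]
          have hα0 : α ≠ 0 := hα
          constructor
          · rintro (h1 | h2)
            · exfalso; apply hα0; linear_combination h1
            · rw [hc]
              linear_combination (((u2⁻¹ : (ZMod (p^k))ˣ) : ZMod (p^k))) * h2 - x * h12
          · rintro rfl
            right
            rw [hc]
            linear_combination 2*hc - α * h12
      rw [hset, Set.ncard_singleton]
end
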